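/- arXiv:1403.5826 — 3 statements merged into one kernel-verified Lean document; each statement's English description precedes it below -/
import Mathlib

section
/- Let K ⊆ F ⊆ L be a tower of number fields, let p be a prime number, let t be a positive integer, and let 𝔭 be a nonzero prime ideal of the ring of integers O_K of K. Assume: (i) for every nonzero prime ideal 𝔓 of O_L lying over 𝔭, p^t divides e(𝔓/𝔭)·f(𝔓/𝔭); and (ii) for every nonzero prime ideal 𝔮 of O_F lying over 𝔭, p does not divide e(𝔮/𝔭)·f(𝔮/𝔭). Then p^t divides the field degree [L:F]. -/
/-!
Fix a prime `𝔮` of `𝓞 F` above `𝔭`. The fundamental identity over `𝔮` writes `[L : F]` as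
`∑ e(𝔓/𝔮) f(𝔓/𝔮)` over the primes `𝔓` above `𝔮`. Since `e` and `f` are multiplicative in towers,
`e(𝔓/𝔭) f(𝔓/𝔭) = e(𝔮/𝔭) f(𝔮/𝔭) · e(𝔓/𝔮) f(𝔓/𝔮)`; the first factor is prime to `p`, so `p ^ t`
divides every summand.
-/

open NumberField Ideal

section Tower

variable {R S T : Type*} [CommRing R] [CommRing S] [CommRing T]
  [Algebra R S] [Algebra S T] [Algebra R T] [IsScalarTower R S T]

theorem Ideal.ramificationIdx_mul_inertiaDeg_tower (q : Ideal S) (r : Ideal T) [r.LiesOver q]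
    [Module.Flat S T] :
    r.ramificationIdx R * r.inertiaDeg R =
      q.ramificationIdx R * q.inertiaDeg R * (r.ramificationIdx S * r.inertiaDeg S) := by
  rw [ramificationIdx_tower q r, inertiaDeg_tower q r]
  ring

theorem Ideal.pow_dvd_finrank_of_not_dvd_ramificationIdx_mul_inertiaDeg [IsDomain S]
    [Module.Finite S T] [Module.Flat S T] (q : Ideal S) [q.IsPrime] [Fintype (q.primesOver T)]
    {p t : ℕ} (hp : p.Prime) (hq : ¬ p ∣ q.ramificationIdx R * q.inertiaDeg R)
    (hT : ∀ r ∈ q.primesOver T, p ^ t ∣ r.ramificationIdx R * r.inertiaDeg R) :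
    p ^ t ∣ Module.finrank S T := by
  rw [← sum_ramification_inertia_eq_finrank q T]
  refine Finset.dvd_sum fun ⟨r, hr⟩ _ ↦ ?_
  have : r.LiesOver q := hr.2
  have hcop : (p ^ t).Coprime (q.ramificationIdx R * q.inertiaDeg R) :=
    ((Nat.Prime.coprime_iff_not_dvd hp).mpr hq).pow_left t
  exact hcop.dvd_of_dvd_mul_left (ramificationIdx_mul_inertiaDeg_tower (R := R) q r ▸ hT r hr)

end Tower

theorem Ideal.ramificationIdx'_mul_inertiaDeg'_eq_ramificationIdx_mul_inertiaDeg
    {R S : Type*} [CommRing R] [CommRing S] [Algebra R S] [IsDedekindDomain R] [IsDedekindDomain S] [Module.IsTorsionFree R S]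
    {p : Ideal R} [p.IsPrime] (hp : p ≠ ⊥) (q : Ideal S) [q.IsPrime] [q.LiesOver p] :
    p.ramificationIdx' q * p.inertiaDeg' q = q.ramificationIdx R * q.inertiaDeg R := by
  have : p.IsMaximal := Ring.DimensionLEOne.maximalOfPrime hp ‹_›
  have : q.IsMaximal := Ring.DimensionLEOne.maximalOfPrime (ne_bot_of_liesOver_of_ne_bot hp q) ‹_›
  rw [ramificationIdx'_eq_ramificationIdx p q hp, inertiaDeg'_eq_inertiaDeg p q]

theorem selectivity_stmt0_general
    (K F L : Type) [Field K] [Field F] [Field L]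
    [NumberField K] [NumberField F] [NumberField L]
    [Algebra K F] [Algebra F L] [Algebra K L] [IsScalarTower K F L]
    (p t : ℕ) (hp : p.Prime)
    (𝔭 : Ideal (𝓞 K)) (h𝔭ne : 𝔭 ≠ ⊥) (h𝔭 : 𝔭.IsPrime)
    (hL : ∀ P : Ideal (𝓞 L), P ≠ ⊥ → P.IsPrime →
        Ideal.comap (algebraMap (𝓞 K) (𝓞 L)) P = 𝔭 →
        p ^ t ∣ Ideal.ramificationIdx' 𝔭 P *
          Ideal.inertiaDeg' 𝔭 P)
    (hF : ∀ 𝔮 : Ideal (𝓞 F), 𝔮 ≠ ⊥ → 𝔮.IsPrime →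
        Ideal.comap (algebraMap (𝓞 K) (𝓞 F)) 𝔮 = 𝔭 →
        ¬ p ∣ Ideal.ramificationIdx' 𝔭 𝔮 *
          Ideal.inertiaDeg' 𝔭 𝔮) :
    p ^ t ∣ Module.finrank F L := by
  have : 𝔭.IsMaximal := Ring.DimensionLEOne.maximalOfPrime h𝔭ne h𝔭
  obtain ⟨𝔮, h𝔮, _⟩ := exists_maximal_ideal_liesOver_of_isIntegral (S := 𝓞 F) 𝔭
  rw [IsFractionRing.finrank_eq (𝓞 F) F (𝓞 L) L]
  refine pow_dvd_finrank_of_not_dvd_ramificationIdx_mul_inertiaDeg (R := 𝓞 K) 𝔮 hp ?_ ?_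
  · rw [← ramificationIdx'_mul_inertiaDeg'_eq_ramificationIdx_mul_inertiaDeg h𝔭ne 𝔮]
    exact hF 𝔮 (ne_bot_of_liesOver_of_ne_bot h𝔭ne 𝔮) h𝔮.isPrime (over_def 𝔮 𝔭).symm
  · rintro P ⟨hP, _⟩
    have : P.LiesOver 𝔭 := LiesOver.trans P 𝔮 𝔭
    rw [← ramificationIdx'_mul_inertiaDeg'_eq_ramificationIdx_mul_inertiaDeg h𝔭ne P]
    exact hL P (ne_bot_of_liesOver_of_ne_bot h𝔭ne P) hP (over_def P 𝔭).symm

/-- Let `K ⊆ F ⊆ L` be a tower of number fields, `p` a prime, `t > 0`,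
and `𝔭` a nonzero prime ideal of `𝓞 K`.  If `p ^ t` divides `e · f` for every nonzero prime
of `𝓞 L` over `𝔭`, while `p` does not divide `e · f` for any nonzero prime of `𝓞 F` over `𝔭`,
then `p ^ t` divides `[L : F]`. -/
theorem selectivity_stmt0
    (K F L : Type) [Field K] [Field F] [Field L]
    [NumberField K] [NumberField F] [NumberField L]
    [Algebra K F] [Algebra F L] [Algebra K L] [IsScalarTower K F L]
    (p t : ℕ) (hp : p.Prime) (ht : 0 < t)
    (𝔭 : Ideal (𝓞 K)) (h𝔭ne : 𝔭 ≠ ⊥) (h𝔭 : 𝔭.IsPrime)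
    (hL : ∀ P : Ideal (𝓞 L), P ≠ ⊥ → P.IsPrime →
        Ideal.comap (algebraMap (𝓞 K) (𝓞 L)) P = 𝔭 →
        p ^ t ∣ Ideal.ramificationIdx' 𝔭 P *
          Ideal.inertiaDeg' 𝔭 P)
    (hF : ∀ 𝔮 : Ideal (𝓞 F), 𝔮 ≠ ⊥ → 𝔮.IsPrime →
        Ideal.comap (algebraMap (𝓞 K) (𝓞 F)) 𝔮 = 𝔭 →
        ¬ p ∣ Ideal.ramificationIdx' 𝔭 𝔮 *
          Ideal.inertiaDeg' 𝔭 𝔮) :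
    p ^ t ∣ Module.finrank F L :=
  selectivity_stmt0_general K F L p t hp 𝔭 h𝔭ne h𝔭 hL hF
end

section
/- Let K ⊆ F ⊆ L be a tower of number fields, let p be a prime number, let t be a positive integer, and let 𝔭 be a nonzero prime ideal of the ring of integers O_K of K. Assume: (i) for every nonzero prime ideal 𝔓 of O_L lying over 𝔭, p^t divides e(𝔓/𝔭)·f(𝔓/𝔭); (ii) for every nonzero prime ideal 𝔮 of O_F lying over 𝔭, p does not divide e(𝔮/𝔭)·f(𝔮/𝔭); and (iii) p^{t+1} does not divide [L:K]. Then p does not divide the field degree [F:K]. -/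
open NumberField Ideal Module

/-!
Choose a prime `𝔮` of `F` over `𝔭`. For every prime `P` of `L` over `𝔮`, `e·f` is multiplicative
in the tower `K ⊆ F ⊆ L`, so `p ^ t ∣ e(P/𝔭) f(P/𝔭) = e(𝔮/𝔭) f(𝔮/𝔭) · e(P/𝔮) f(P/𝔮)` with the
first factor prime to `p`; hence `p ^ t ∣ e(P/𝔮) f(P/𝔮)`. Summing over `P` gives `p ^ t ∣ [L : F]`,
and `p ∣ [F : K]` would then force `p ^ (t + 1) ∣ [F : K] [L : F] = [L : K]`.
-/

namespace Ideal

theorem ramificationIdx'_mul_inertiaDeg'_tower {R S T : Type*} [CommRing R] [IsDomain R]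
    [CommRing S] [IsDedekindDomain S] [CommRing T] [IsDedekindDomain T]
    [Algebra R S] [Algebra S T] [Algebra R T] [IsScalarTower R S T]
    [Module.IsTorsionFree R S] [Module.IsTorsionFree S T]
    (p : Ideal R) (P : Ideal S) (Q : Ideal T) [p.IsMaximal] [P.IsMaximal] [Q.IsPrime]
    [P.LiesOver p] [Q.LiesOver P] :
    p.ramificationIdx' Q * p.inertiaDeg' Q =
      p.ramificationIdx' P * p.inertiaDeg' P * (P.ramificationIdx' Q * P.inertiaDeg' Q) := by
  rw [ramificationIdx'_algebra_tower' p P Q, inertiaDeg'_algebra_tower p P Q]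
  ring

theorem dvd_finrank_of_forall_dvd_ramificationIdx'_mul_inertiaDeg' {R S : Type*} [CommRing R]
    [IsDedekindDomain R] [CommRing S] [IsDedekindDomain S] [Algebra R S] [Module.Finite R S]
    [Module.IsTorsionFree R S] (K L : Type*) [Field K] [Field L] [Algebra R K]
    [IsFractionRing R K] [Algebra S L] [IsFractionRing S L] [Algebra K L] [Algebra R L]
    [IsScalarTower R S L] [IsScalarTower R K L] {p : Ideal R} [p.IsMaximal] (hp : p ≠ ⊥) {n : ℕ}
    (h : ∀ P ∈ p.primesOver S, n ∣ p.ramificationIdx' P * p.inertiaDeg' P) :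
    n ∣ finrank K L := by
  rw [IsFractionRing.finrank_eq R K S L, ← sum_ramification_inertia_eq_finrank p S]
  refine Finset.dvd_sum fun P _ => ?_
  rw [← ramificationIdx'_eq_ramificationIdx p P.1 hp, ← inertiaDeg'_eq_inertiaDeg p P.1]
  exact h P.1 P.2

end Ideal

theorem selectivity_stmt1_general
    (K F L : Type) [Field K] [Field F] [Field L]
    [NumberField K] [NumberField F] [NumberField L]
    [Algebra K F] [Algebra F L] [Algebra K L] [IsScalarTower K F L]
    (p t : ℕ) (hp : p.Prime)
    (𝔭 : Ideal (𝓞 K)) (h𝔭ne : 𝔭 ≠ ⊥) (h𝔭 : 𝔭.IsPrime)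
    (hL : ∀ P : Ideal (𝓞 L), P ≠ ⊥ → P.IsPrime →
        Ideal.comap (algebraMap (𝓞 K) (𝓞 L)) P = 𝔭 →
        p ^ t ∣ Ideal.ramificationIdx' 𝔭 P *
          Ideal.inertiaDeg' 𝔭 P)
    (hF : ∀ 𝔮 : Ideal (𝓞 F), 𝔮 ≠ ⊥ → 𝔮.IsPrime →
        Ideal.comap (algebraMap (𝓞 K) (𝓞 F)) 𝔮 = 𝔭 →
        ¬ p ∣ Ideal.ramificationIdx' 𝔭 𝔮 *
          Ideal.inertiaDeg' 𝔭 𝔮)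
    (hLK : ¬ p ^ (t + 1) ∣ Module.finrank K L) :
    ¬ p ∣ Module.finrank K F := by
  have : 𝔭.IsMaximal := h𝔭.isMaximal h𝔭ne
  obtain ⟨𝔮, _, _⟩ := exists_maximal_ideal_liesOver_of_isIntegral (S := 𝓞 F) 𝔭
  have h𝔮ne : 𝔮 ≠ ⊥ := ne_bot_of_liesOver_of_ne_bot h𝔭ne 𝔮
  have hcop : (p ^ t).Coprime (𝔭.ramificationIdx' 𝔮 * 𝔭.inertiaDeg' 𝔮) :=
    (hp.coprime_iff_not_dvd.2 (hF 𝔮 h𝔮ne inferInstance (𝔮.over_def 𝔭).symm)).pow_left t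
  have hFL : p ^ t ∣ finrank F L := by
    refine dvd_finrank_of_forall_dvd_ramificationIdx'_mul_inertiaDeg' (S := 𝓞 L) F L h𝔮ne
      fun P ⟨_, _⟩ => hcop.dvd_of_dvd_mul_left ?_
    have := LiesOver.trans P 𝔮 𝔭
    rw [← ramificationIdx'_mul_inertiaDeg'_tower 𝔭 𝔮 P]
    exact hL P (ne_bot_of_liesOver_of_ne_bot h𝔮ne P) inferInstance (P.over_def 𝔭).symm
  intro hpF
  apply hLK
  rw [← finrank_mul_finrank K F L, pow_succ']
  exact mul_dvd_mul hpF hFL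

/-- Let `K ⊆ F ⊆ L` be a tower of number fields, `p` a prime, `t > 0`,
and `𝔭` a nonzero prime ideal of `𝓞 K`.  If `p ^ t` divides `e · f` for every nonzero prime
of `𝓞 L` over `𝔭`, `p` does not divide `e · f` for any nonzero prime of `𝓞 F` over `𝔭`,
and `p ^ (t + 1)` does not divide `[L : K]`, then `p` does not divide `[F : K]`. -/
theorem selectivity_stmt1
    (K F L : Type) [Field K] [Field F] [Field L]
    [NumberField K] [NumberField F] [NumberField L]
    [Algebra K F] [Algebra F L] [Algebra K L] [IsScalarTower K F L]
    (p t : ℕ) (hp : p.Prime) (ht : 0 < t)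
    (𝔭 : Ideal (𝓞 K)) (h𝔭ne : 𝔭 ≠ ⊥) (h𝔭 : 𝔭.IsPrime)
    (hL : ∀ P : Ideal (𝓞 L), P ≠ ⊥ → P.IsPrime →
        Ideal.comap (algebraMap (𝓞 K) (𝓞 L)) P = 𝔭 →
        p ^ t ∣ Ideal.ramificationIdx' 𝔭 P *
          Ideal.inertiaDeg' 𝔭 P)
    (hF : ∀ 𝔮 : Ideal (𝓞 F), 𝔮 ≠ ⊥ → 𝔮.IsPrime →
        Ideal.comap (algebraMap (𝓞 K) (𝓞 F)) 𝔮 = 𝔭 →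
        ¬ p ∣ Ideal.ramificationIdx' 𝔭 𝔮 *
          Ideal.inertiaDeg' 𝔭 𝔮)
    (hLK : ¬ p ^ (t + 1) ∣ Module.finrank K L) :
    ¬ p ∣ Module.finrank K F :=
  selectivity_stmt1_general K F L p t hp 𝔭 h𝔭ne h𝔭 hL hF hLK
end

section
/- Let K ⊆ F ⊆ L be a tower of number fields with F/K a Galois extension, let p be a prime number, let t be a positive integer, and let 𝔭 be a nonzero prime ideal of the ring of integers O_K of K. Assume: (i) for every nonzero prime ideal 𝔓 of O_L lying over 𝔭, p^t divides e(𝔓/𝔭)·f(𝔓/𝔭); and (ii) there exists at least one nonzero prime ideal 𝔮₀ of O_F lying over 𝔭 such that p does not divide e(𝔮₀/𝔭)·f(𝔮₀/𝔭). Then p^t divides the field degree [L:F]. -/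
/-!
Ramification indices and inertia degrees are multiplicative in the tower `K ⊆ F ⊆ L`, so for
every prime `𝔓` of `𝓞 L` over `𝔮₀` the product `e(𝔓/𝔭) f(𝔓/𝔭)` is `e(𝔮₀/𝔭) f(𝔮₀/𝔭)` times
`e(𝔓/𝔮₀) f(𝔓/𝔮₀)`. As `p ^ t` is coprime to the first factor, it divides the second, hence
divides `[L : F] = ∑_{𝔓 ∣ 𝔮₀} e(𝔓/𝔮₀) f(𝔓/𝔮₀)`.
-/

open NumberField Ideal

namespace Ideal

theorem dvd_finrank_of_coprime_ramificationIdx_mul_inertiaDeg {R S T : Type*} [CommRing R]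
    [CommRing S] [CommRing T] [IsDomain S] [Algebra R S] [Algebra S T] [Algebra R T]
    [IsScalarTower R S T] [Module.Finite S T] [Module.Flat S T] (q : Ideal S) [q.IsPrime]
    {n : ℕ} (hcop : n.Coprime (q.ramificationIdx R * q.inertiaDeg R))
    (hdvd : ∀ r ∈ q.primesOver T, n ∣ r.ramificationIdx R * r.inertiaDeg R) :
    n ∣ Module.finrank S T := by
  have := (Algebra.QuasiFinite.finite_primesOver (S := T) q).fintype
  rw [← sum_ramification_inertia_eq_finrank q T]
  refine Finset.dvd_sum fun ⟨r, hr⟩ _ ↦ ?_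
  have : r.LiesOver q := hr.2
  have hmul : r.ramificationIdx R * r.inertiaDeg R =
      q.ramificationIdx R * q.inertiaDeg R * (r.ramificationIdx S * r.inertiaDeg S) := by
    rw [ramificationIdx_tower q r, inertiaDeg_tower q r]
    ring
  exact hcop.dvd_of_dvd_mul_left (hmul ▸ hdvd r hr)

theorem ramificationIdx'_mul_inertiaDeg'_eq_ramificationIdx_mul_inertiaDeg_s2 {R S : Type*}
    [CommRing R] [IsDomain R] [CommRing S] [IsDedekindDomain S] [Algebra R S]
    [Module.IsTorsionFree R S] {p : Ideal R} (hp : p ≠ ⊥) (P : Ideal S) [p.IsMaximal]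
    [P.IsMaximal] [P.LiesOver p] :
    ramificationIdx' p P * inertiaDeg' p P = P.ramificationIdx R * P.inertiaDeg R := by
  rw [ramificationIdx'_eq_ramificationIdx p P hp, inertiaDeg'_eq_inertiaDeg p P]

end Ideal

theorem selectivity_stmt2_general
    (K F L : Type) [Field K] [Field F] [Field L]
    [NumberField K] [NumberField F] [NumberField L]
    [Algebra K F] [Algebra F L] [Algebra K L] [IsScalarTower K F L]
    (p t : ℕ) (hp : p.Prime)
    (𝔭 : Ideal (𝓞 K)) (h𝔭ne : 𝔭 ≠ ⊥) (h𝔭 : 𝔭.IsPrime)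
    (hL : ∀ P : Ideal (𝓞 L), P ≠ ⊥ → P.IsPrime →
        Ideal.comap (algebraMap (𝓞 K) (𝓞 L)) P = 𝔭 →
        p ^ t ∣ Ideal.ramificationIdx' 𝔭 P *
          Ideal.inertiaDeg' 𝔭 P)
    (hF : ∃ 𝔮₀ : Ideal (𝓞 F), 𝔮₀ ≠ ⊥ ∧ 𝔮₀.IsPrime ∧
        Ideal.comap (algebraMap (𝓞 K) (𝓞 F)) 𝔮₀ = 𝔭 ∧
        ¬ p ∣ Ideal.ramificationIdx' 𝔭 𝔮₀ *
          Ideal.inertiaDeg' 𝔭 𝔮₀) :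
    p ^ t ∣ Module.finrank F L := by
  obtain ⟨𝔮, h𝔮ne, h𝔮, h𝔮over, h𝔮ndvd⟩ := hF
  have : 𝔭.IsMaximal := h𝔭.isMaximal h𝔭ne
  have : 𝔮.IsMaximal := h𝔮.isMaximal h𝔮ne
  have : 𝔮.LiesOver 𝔭 := ⟨h𝔮over.symm⟩
  rw [IsFractionRing.finrank_eq (𝓞 F) F (𝓞 L) L]
  refine dvd_finrank_of_coprime_ramificationIdx_mul_inertiaDeg (R := 𝓞 K) 𝔮 ?_ fun P hP ↦ ?_
  · rw [← ramificationIdx'_mul_inertiaDeg'_eq_ramificationIdx_mul_inertiaDeg_s2 h𝔭ne]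
    exact (hp.coprime_iff_not_dvd.mpr h𝔮ndvd).pow_left t
  · obtain ⟨hPprime, hPover⟩ := hP
    have : P.LiesOver 𝔭 := LiesOver.trans P 𝔮 𝔭
    have hPne : P ≠ ⊥ := ne_bot_of_liesOver_of_ne_bot h𝔮ne P
    have : P.IsMaximal := hPprime.isMaximal hPne
    rw [← ramificationIdx'_mul_inertiaDeg'_eq_ramificationIdx_mul_inertiaDeg_s2 h𝔭ne]
    exact hL P hPne hPprime (P.over_def 𝔭).symm

/-- Let `K ⊆ F ⊆ L` be a tower of number fields with `F/K` Galois, `p` a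
prime, `t > 0`, and `𝔭` a nonzero prime ideal of `𝓞 K`.  If `p ^ t` divides `e · f` for every
nonzero prime of `𝓞 L` over `𝔭`, and there is at least one nonzero prime `𝔮₀` of `𝓞 F` over
`𝔭` with `p ∤ e(𝔮₀/𝔭) · f(𝔮₀/𝔭)`, then `p ^ t` divides `[L : F]`. -/
theorem selectivity_stmt2
    (K F L : Type) [Field K] [Field F] [Field L]
    [NumberField K] [NumberField F] [NumberField L]
    [Algebra K F] [Algebra F L] [Algebra K L] [IsScalarTower K F L]
    [IsGalois K F]
    (p t : ℕ) (hp : p.Prime) (ht : 0 < t)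
    (𝔭 : Ideal (𝓞 K)) (h𝔭ne : 𝔭 ≠ ⊥) (h𝔭 : 𝔭.IsPrime)
    (hL : ∀ P : Ideal (𝓞 L), P ≠ ⊥ → P.IsPrime →
        Ideal.comap (algebraMap (𝓞 K) (𝓞 L)) P = 𝔭 →
        p ^ t ∣ Ideal.ramificationIdx' 𝔭 P *
          Ideal.inertiaDeg' 𝔭 P)
    (hF : ∃ 𝔮₀ : Ideal (𝓞 F), 𝔮₀ ≠ ⊥ ∧ 𝔮₀.IsPrime ∧
        Ideal.comap (algebraMap (𝓞 K) (𝓞 F)) 𝔮₀ = 𝔭 ∧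
        ¬ p ∣ Ideal.ramificationIdx' 𝔭 𝔮₀ *
          Ideal.inertiaDeg' 𝔭 𝔮₀) :
    p ^ t ∣ Module.finrank F L :=
  selectivity_stmt2_general K F L p t hp 𝔭 h𝔭ne h𝔭 hL hF
end
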